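/- arXiv:2012.13621 — 2 statements merged into one kernel-verified Lean document; each statement's English description precedes it below -/
import Mathlib

section
/- If a₁ ≠ 0 and the identities a₁c₁₁ + a₂c₂₁ = a₁³, a₁c₁₂ + a₂c₂₂ = 3a₁²a₂, a₁c₁₃ + a₂c₂₃ = 3a₁a₂², a₁c₁₄ + a₂c₂₄ = a₂³ hold, then α := a₂/a₁ satisfies the three quadratic equations: 3c₂₁α² + (3c₁₁ − c₂₂)α − c₁₂ = 0; c₂₂α² + (c₁₂ − c₂₃)α − c₁₃ = 0; c₂₃α² + (c₁₃ − 3c₂₄)α − 3c₁₄ = 0. -/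
/-- Multiplied by `a₁²`, the quadratic becomes `m a₂ (a₁ x + a₂ y) - n a₁ (a₁ u + a₂ v)`. -/
theorem quadratic_eq_zero_of_div_of_linear_eqs {K : Type*} [Field K] {a₁ a₂ x y u v p q m n : K}
    (ha₁ : a₁ ≠ 0) (hp : a₁ * x + a₂ * y = p) (hq : a₁ * u + a₂ * v = q)
    (hpq : m * a₂ * p = n * a₁ * q) :
    m * y * (a₂ / a₁) ^ 2 + (m * x - n * v) * (a₂ / a₁) - n * u = 0 := by
  field_simp
  linear_combination m * a₂ * hp - n * a₁ * hq + hpq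

/-- The ratio α = a₂/a₁ satisfies three quadratic equations. -/
theorem stmt_9 (a1 a2 c11 c12 c13 c14 c21 c22 c23 c24 α : ℂ)
    (ha1 : a1 ≠ 0) (hα : α = a2 / a1)
    (h1 : a1 * c11 + a2 * c21 = a1 ^ 3)
    (h2 : a1 * c12 + a2 * c22 = 3 * a1 ^ 2 * a2)
    (h3 : a1 * c13 + a2 * c23 = 3 * a1 * a2 ^ 2)
    (h4 : a1 * c14 + a2 * c24 = a2 ^ 3) :
    3 * c21 * α ^ 2 + (3 * c11 - c22) * α - c12 = 0 ∧
    c22 * α ^ 2 + (c12 - c23) * α - c13 = 0 ∧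
    c23 * α ^ 2 + (c13 - 3 * c24) * α - 3 * c14 = 0 := by
  subst hα
  refine ⟨?_, ?_, ?_⟩
  · simpa using quadratic_eq_zero_of_div_of_linear_eqs (m := 3) (n := 1) ha1 h1 h2 (by ring)
  · simpa using quadratic_eq_zero_of_div_of_linear_eqs (m := 1) (n := 1) ha1 h2 h3 (by ring)
  · simpa using quadratic_eq_zero_of_div_of_linear_eqs (m := 1) (n := 3) ha1 h3 h4 (by ring)
end

section
/- If a₁, a₂ are both nonzero and satisfy the four homogeneous linear equations [c₁₁ − A₁]a₁ + c₂₁a₂ = 0, c₁₂a₁ + [c₂₂ − 3A₁]a₂ = 0, [c₁₃ − 3A₂]a₁ + c₂₃a₂ = 0, c₁₄a₁ + [c₂₄ − A₂]a₂ = 0, where A₁ = a₁² and A₂ = a₂², then the constraint [c₁₂(c₁₃ − 3c₂₄) + 3c₁₄(−3c₁₁ + c₂₂)]·[3c₂₁(c₁₃ − 3c₂₄) + c₂₃(c₂₂ − 3c₁₁)] = (c₁₂c₂₃ − 9c₁₄c₂₁)² holds. -/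
/-- The second constraint on the eight coefficients c_{nℓ}. -/
theorem stmt_15 (a1 a2 c11 c12 c13 c14 c21 c22 c23 c24 : ℂ)
    (ha1 : a1 ≠ 0) (ha2 : a2 ≠ 0)
    (h1 : (c11 - a1 ^ 2) * a1 + c21 * a2 = 0)
    (h2 : c12 * a1 + (c22 - 3 * a1 ^ 2) * a2 = 0)
    (h3 : (c13 - 3 * a2 ^ 2) * a1 + c23 * a2 = 0)
    (h4 : c14 * a1 + (c24 - a2 ^ 2) * a2 = 0) :
    (c12 * (c13 - 3 * c24) + 3 * c14 * (-(3 * c11) + c22))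
      * (3 * c21 * (c13 - 3 * c24) + c23 * (c22 - 3 * c11))
    = (c12 * c23 - 9 * c14 * c21) ^ 2 := by
  have hX : (c13 - 3*c24)*(a1*a2) = 3*c14*a1^2 - c23*a2^2 := by
    linear_combination a2*h3 - 3*a1*h4
  have hY : (c22 - 3*c11)*(a1*a2) = 3*c21*a2^2 - c12*a1^2 := by
    linear_combination a1*h2 - 3*a2*h1
  apply mul_right_cancel₀ (pow_ne_zero 2 (mul_ne_zero ha1 ha2))
  linear_combination (3*c21*(c13-3*c24)*(a1*a2) + c23*(c22-3*c11)*(a1*a2)) * (c12*hX + 3*c14*hY)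
    + (c12*(3*c14*a1^2 - c23*a2^2) + 3*c14*(3*c21*a2^2 - c12*a1^2)) * (3*c21*hX + c23*hY)
end
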